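/- arXiv:0905.1196 — 2 statements merged into one kernel-verified Lean document; each statement's English description precedes it below -/
import Mathlib

section
/- Let p be prime, n ≥ 1, 1 ≤ e ≤ n, and z any integer. If Φ_j (for n-e+1 ≤ j ≤ n) are integers coprime to p, then Σ_{k=0}^{p^n - 1} ⟨(z - Σ_{j=n-e+1}^n a_j^{(k)} Φ_j p^{n-j})/p^e⟩ = (p^n - p^{n-e})/2, where a_j^{(k)} are the p-adic digits of k and ⟨·⟩ is the fractional part. -/
/-!
Only the top `e` digits of `k`, i.e. `q = ⌊k / p ^ (n - e)⌋`, enter the summand, and each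
`q < p ^ e` comes from exactly `p ^ (n - e)` values of `k`. Since the `Φ_j` are units modulo `p`,
`q ↦ Σ_j a_j Φ_j p ^ (n - j)` is injective modulo `p ^ e`: modulo `p` it sees only the top
digit times a unit, and after removing that digit the rest is the same map one level down.
Hence `z - Σ_j a_j Φ_j p ^ (n - j)` runs through all residues modulo `p ^ e`, and the fractional
parts add up to `Σ_{r < p ^ e} r / p ^ e = (p ^ e - 1) / 2`.
-/

open Finset

section FractSum

variable {K : Type*} [Field K] [LinearOrder K] [IsStrictOrderedRing K] [FloorRing K]

theorem sum_range_natCast_div_self (N : ℕ) [NeZero N] :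
    ∑ r ∈ range N, (r : K) / N = (N - 1) / 2 := by
  have hN : (N : K) ≠ 0 := NeZero.ne _
  have gauss := congrArg (Nat.cast : ℕ → K) (sum_range_id_mul_two N)
  push_cast [Nat.one_le_iff_ne_zero.mpr (NeZero.ne N)] at gauss
  rw [← sum_div]
  field_simp
  linear_combination gauss

theorem sum_range_fract_div_of_injOn_modEq (N : ℕ) [NeZero N] (g : ℕ → ℤ)
    (hg : ∀ q < N, ∀ q' < N, g q ≡ g q' [ZMOD N] → q = q') :
    ∑ q ∈ range N, Int.fract ((g q : K) / N) = (N - 1) / 2 := by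
  have fract_eq (q : ℕ) : Int.fract ((g q : K) / N) = ((g q : ZMod N).val : K) / N := by
    rw [Int.fract_div_intCast_eq_div_intCast_mod, ← ZMod.val_intCast, Int.cast_natCast]
  simp_rw [fract_eq]
  rw [← sum_range_natCast_div_self N]
  have maps : Set.MapsTo (fun q ↦ (g q : ZMod N).val) (range N) (range N) :=
    fun _ _ ↦ mem_range.mpr (ZMod.val_lt _)
  have inj : Set.InjOn (fun q ↦ (g q : ZMod N).val) (range N) := fun q hq q' hq' h ↦
    hg q (mem_range.mp hq) q' (mem_range.mp hq')
      ((ZMod.intCast_eq_intCast_iff _ _ N).mp (ZMod.val_injective N h))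
  exact sum_nbij _ maps inj (surjOn_of_injOn_of_card_le _ maps inj le_rfl) fun _ _ ↦ rfl

end FractSum

theorem sum_range_mul_comp_div {M : Type*} [AddCommMonoid M] (f : ℕ → M) (A B : ℕ) :
    ∑ k ∈ range (A * B), f (k / B) = B • ∑ q ∈ range A, f q := by
  induction A with
  | zero => simp
  | succ A ih =>
    have block : ∀ x ∈ range B, f ((A * B + x) / B) = f A := fun x hx ↦ by
      have hxB := mem_range.mp hx
      rw [Nat.mul_comm, Nat.mul_add_div (by omega), Nat.div_eq_of_lt hxB, add_zero]
    rw [Nat.succ_mul, sum_range_add, ih, sum_congr rfl block, sum_range_succ, sum_const,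
      card_range, smul_add]

def weightedDigitSum (b : ℕ) (c : ℕ → ℤ) (e q : ℕ) : ℤ :=
  ∑ i ∈ range e, ((q / b ^ i % b : ℕ) : ℤ) * c i * (b : ℤ) ^ (e - 1 - i)

theorem weightedDigitSum_succ (b : ℕ) (c : ℕ → ℤ) (e q : ℕ) :
    weightedDigitSum b c (e + 1) q =
      ((q % b : ℕ) : ℤ) * c 0 * (b : ℤ) ^ e +
        weightedDigitSum b (fun i ↦ c (i + 1)) e (q / b) := by
  rw [weightedDigitSum, sum_range_succ', add_comm, weightedDigitSum]
  congr 1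
  · simp
  · refine sum_congr rfl fun i _ ↦ ?_
    rw [pow_succ', ← Nat.div_div_eq_div_mul, show e + 1 - 1 - (i + 1) = e - 1 - i by omega]

theorem eq_of_weightedDigitSum_modEq {b : ℕ} {c : ℕ → ℤ} {e q q' : ℕ}
    (hc : ∀ i < e, IsCoprime (c i) b) (hq : q < b ^ e) (hq' : q' < b ^ e)
    (h : weightedDigitSum b c e q ≡ weightedDigitSum b c e q' [ZMOD b ^ e]) : q = q' := by
  induction e generalizing c q q' with
  | zero => simp only [pow_zero, Nat.lt_one_iff] at hq hq'; omega
  | succ e ih =>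
    have hb : 0 < b := Nat.pos_of_ne_zero (by rintro rfl; simp at hq)
    rw [weightedDigitSum_succ, weightedDigitSum_succ, pow_succ'] at h
    have multiple_modEq_zero (x : ℤ) : x * (b : ℤ) ^ e ≡ 0 [ZMOD b ^ e] :=
      Int.modEq_zero_iff_dvd.mpr (dvd_mul_left _ _)
    have high : q / b = q' / b :=
      ih (fun i _ ↦ hc (i + 1) (by omega)) (Nat.div_lt_of_lt_mul (by rwa [← pow_succ']))
        (Nat.div_lt_of_lt_mul (by rwa [← pow_succ']))
        (((multiple_modEq_zero _).trans (multiple_modEq_zero _).symm).add_left_cancel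
          (h.of_mul_left _))
    rw [high] at h
    have low : q % b = q' % b := by
      have hbe : (b : ℤ) ^ e ≠ 0 := pow_ne_zero _ (by exact_mod_cast hb.ne')
      have h₁ := (Int.ModEq.add_right_cancel' _ h).mul_right_cancel' hbe
      have h₂ : ((q % b : ℕ) : ℤ) ≡ (q' % b : ℕ) [ZMOD b] :=
        Int.modEq_of_dvd <| (hc 0 (by omega)).symm.dvd_of_dvd_mul_right <| by
          simpa [sub_mul] using h₁.dvd
      simpa [Nat.ModEq] using Int.natCast_modEq_iff.mp h₂
    rw [← Nat.div_add_mod q b, ← Nat.div_add_mod q' b, high, low]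

theorem sum_Ioc_digit_eq_weightedDigitSum (b m e k : ℕ) (Φ : ℕ → ℤ) :
    ∑ j ∈ Ioc m (m + e), ((k / b ^ (j - 1) % b : ℕ) : ℤ) * Φ j * (b : ℤ) ^ (m + e - j) =
      weightedDigitSum b (fun i ↦ Φ (m + 1 + i)) e (k / b ^ m) := by
  rw [← Ico_add_one_add_one_eq_Ioc, sum_Ico_eq_sum_range, weightedDigitSum,
    show m + e + 1 - (m + 1) = e by omega]
  refine sum_congr rfl fun i _ ↦ ?_
  rw [Nat.div_div_eq_div_mul, ← pow_add, show m + 1 + i - 1 = m + i by omega,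
    show m + e - (m + 1 + i) = e - 1 - i by omega]

theorem sum_fract_digits_general
    (p n e : ℕ) (hp : p.Prime) (hen : e ≤ n) (z : ℤ)
    (Φ : ℕ → ℤ)
    (hΦcop : ∀ j, n - e < j → j ≤ n → IsCoprime (Φ j) (p : ℤ)) :
    ∑ k ∈ Finset.range (p ^ n),
        Int.fract (((z - ∑ j ∈ Finset.Ioc (n - e) n,
            (((k / p ^ (j - 1)) % p : ℕ) : ℤ) * Φ j * (p : ℤ) ^ (n - j) : ℤ) : ℚ)
          / (p : ℚ) ^ e)
      = ((p : ℚ) ^ n - (p : ℚ) ^ (n - e)) / 2 := by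
  obtain ⟨m, rfl⟩ : ∃ m, n = m + e := ⟨n - e, by omega⟩
  have : NeZero (p ^ e) := ⟨pow_ne_zero _ hp.ne_zero⟩
  set W := weightedDigitSum p (fun i ↦ Φ (m + 1 + i)) e
  have hW : ∀ q < p ^ e, ∀ q' < p ^ e, z - W q ≡ z - W q' [ZMOD (p ^ e : ℕ)] → q = q' :=
    fun q hq q' hq' h ↦ eq_of_weightedDigitSum_modEq
      (fun i _ ↦ hΦcop (m + 1 + i) (by omega) (by omega)) hq hq'
      (by rw [Nat.cast_pow] at h; simpa using h.sub_left z)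
  simp only [Nat.add_sub_cancel, sum_Ioc_digit_eq_weightedDigitSum]
  rw [pow_add, mul_comm,
    sum_range_mul_comp_div (fun q ↦ Int.fract (((z - W q : ℤ) : ℚ) / (p : ℚ) ^ e)),
    ← Nat.cast_pow p e, sum_range_fract_div_of_injOn_modEq _ _ hW, nsmul_eq_mul]
  push_cast
  ring

/-- For `p` prime, `1 ≤ e ≤ n`, any integer `z`, and `Φ_j` coprime to `p` for
`n-e+1 ≤ j ≤ n`:
`Σ_{k=0}^{p^n-1} ⟨(z - Σ_{j=n-e+1}^n a_j^(k) Φ_j p^(n-j))/p^e⟩ = (p^n - p^(n-e))/2`,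
where `a_j^(k)` are the `p`-adic digits of `k` and `⟨·⟩` is the fractional part. -/
theorem sum_fract_digits
    (p n e : ℕ) (hp : p.Prime) (hn : 1 ≤ n) (he : 1 ≤ e) (hen : e ≤ n) (z : ℤ)
    (Φ : ℕ → ℤ)
    (hΦcop : ∀ j, n - e < j → j ≤ n → IsCoprime (Φ j) (p : ℤ)) :
    ∑ k ∈ Finset.range (p ^ n),
        Int.fract (((z - ∑ j ∈ Finset.Ioc (n - e) n,
            (((k / p ^ (j - 1)) % p : ℕ) : ℤ) * Φ j * (p : ℤ) ^ (n - j) : ℤ) : ℚ)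
          / (p : ℚ) ^ e)
      = ((p : ℚ) ^ n - (p : ℚ) ^ (n - e)) / 2 :=
  sum_fract_digits_general p n e hp hen z Φ hΦcop
end

section
/- In the elementary abelian setting, Σ_{k=0}^{p^n − 1} Γ_k(m) = (2m − 1)(g_F + p^n − 1), where Γ_k(m) = Σ_{i=1}^r ⌊(m(p^n−1)(Φ(i)+1) − kΦ(i))/p^n⌋ and g_F = ((p^n−1)/2)(−2 + Σ_i (Φ(i)+1)). -/
/-!
For `c` coprime to `q`, the residues of `A - k * c` modulo `q` run over `0, …, q - 1` as `k` does,
so `∑_{k < q} ⌊(A - k c) / q⌋ = (∑_k (A - k c) - ∑_k k) / q = A - (c + 1)(q - 1) / 2`.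
Applied with `q = p ^ n`, `c = Φ i` and `A = m (q - 1)(Φ i + 1)`, each `i` contributes
`(2m - 1)(q - 1)(Φ i + 1) / 2`, and these add up to `(2m - 1)(g_F + q - 1)`.
-/

open Finset

theorem sum_range_emod_sub_mul {q : ℕ} {c : ℤ} (hc : IsCoprime (q : ℤ) c) (A : ℤ) :
    ∑ k ∈ range q, (A - k * c) % q = ∑ k ∈ range q, (k : ℤ) := by
  rcases Nat.eq_zero_or_pos q with rfl | hq
  · simp
  have hqZ : (0 : ℤ) < q := by exact_mod_cast hq
  set r : ℕ → ℕ := fun k => ((A - k * c) % q).toNat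
  have hr (k : ℕ) : (r k : ℤ) = (A - k * c) % q := Int.toNat_of_nonneg (Int.emod_nonneg _ hqZ.ne')
  have hmaps : Set.MapsTo r (range q) (range q) := fun k _ => by
    have := Int.emod_lt_of_pos (A - k * c) hqZ
    have := hr k
    simp only [coe_range, Set.mem_Iio]
    omega
  have hinj : Set.InjOn r (range q) := by
    intro k hk l hl hkl
    simp only [coe_range, Set.mem_Iio] at hk hl
    have hmod : A - k * c ≡ A - l * c [ZMOD q] := by
      unfold Int.ModEq
      rw [← hr, ← hr, hkl]
    have hdvd : (q : ℤ) ∣ (k - l) * c := by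
      simpa [sub_mul] using hmod.dvd
    have := Int.eq_zero_of_abs_lt_dvd (hc.dvd_of_dvd_mul_right hdvd) (by rw [abs_lt]; omega)
    omega
  calc ∑ k ∈ range q, (A - k * c) % q = ∑ k ∈ range q, (r k : ℤ) :=
        sum_congr rfl fun k _ => (hr k).symm
    _ = ∑ k ∈ range q, (k : ℤ) :=
      sum_nbij r hmaps hinj (surjOn_of_injOn_of_card_le r hmaps hinj le_rfl) fun _ _ => rfl

theorem two_mul_sum_range_sub_mul_ediv {q : ℕ} (hq : 0 < q) {c : ℤ} (hc : IsCoprime (q : ℤ) c)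
    (A : ℤ) : 2 * ∑ k ∈ range q, (A - k * c) / q = 2 * A - (c + 1) * (q - 1) := by
  have hdiv : q * ∑ k ∈ range q, (A - k * c) / q + ∑ k ∈ range q, (A - k * c) % q
      = q * A - c * ∑ k ∈ range q, (k : ℤ) := by
    rw [mul_sum, ← sum_add_distrib]
    simp only [Int.mul_ediv_add_emod, sum_sub_distrib, sum_const, card_range, nsmul_eq_mul,
      ← sum_mul]
    ring
  rw [sum_range_emod_sub_mul hc A] at hdiv
  have hgauss : 2 * ∑ k ∈ range q, (k : ℤ) = q * (q - 1) := by
    have := sum_range_id_mul_two q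
    zify [hq] at this
    linarith
  have hqZ : (q : ℤ) ≠ 0 := by exact_mod_cast hq.ne'
  apply mul_left_cancel₀ hqZ
  linear_combination 2 * hdiv - (c + 1) * hgauss

theorem sum_range_floor_sub_mul_div {q : ℕ} (hq : 0 < q) {c : ℤ} (hc : IsCoprime (q : ℤ) c)
    (A : ℤ) : ∑ k ∈ range q, (⌊((A - k * c : ℤ) : ℚ) / q⌋ : ℚ) = A - (c + 1) * (q - 1) / 2 := by
  have := congrArg (Int.cast : ℤ → ℚ) (two_mul_sum_range_sub_mul_ediv hq hc A)
  push_cast at this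
  simp only [Rat.floor_intCast_div_natCast]
  linarith

theorem boseck_sum_eq_genus_formula_general
    (p n r m : ℕ) (hp : p.Prime)
    (Φ : Fin r → ℕ) (hΦcop : ∀ i, Nat.Coprime (Φ i) p)
    (gF : ℚ)
    (hgF : gF = (((p : ℚ) ^ n - 1) / 2) * (-2 + ∑ i, ((Φ i : ℚ) + 1))) :
    ∑ k ∈ Finset.range (p ^ n), ∑ i,
        (⌊(((m : ℤ) * ((p : ℤ) ^ n - 1) * ((Φ i : ℤ) + 1) - (k : ℤ) * (Φ i : ℤ) : ℤ) : ℚ)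
          / (p : ℚ) ^ n⌋ : ℚ)
      = (2 * (m : ℚ) - 1) * (gF + (p : ℚ) ^ n - 1) := by
  have hq : 0 < p ^ n := pow_pos hp.pos n
  have hcop (i : Fin r) : IsCoprime ((p ^ n : ℕ) : ℤ) (Φ i) :=
    Nat.isCoprime_iff_coprime.mpr ((hΦcop i).symm.pow_left n)
  rw [sum_comm, ← Nat.cast_pow (α := ℚ) p n]
  simp only [sum_range_floor_sub_mul_div hq (hcop _)]
  have hterm (i : Fin r) : (((m : ℤ) * ((p : ℤ) ^ n - 1) * ((Φ i : ℤ) + 1) : ℤ) : ℚ)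
      - ((Φ i : ℤ) + 1) * (((p ^ n : ℕ) : ℚ) - 1) / 2
      = (2 * m - 1) * ((p ^ n - 1) / 2) * ((Φ i : ℚ) + 1) := by
    push_cast; ring
  rw [sum_congr rfl fun i _ => hterm i, ← mul_sum, hgF]
  push_cast
  ring

/-- In the elementary abelian setting, `Σ_{k=0}^{p^n-1} Γ_k(m) = (2m-1)(g_F + p^n - 1)`,
where `Γ_k(m) = Σ_{i=1}^r ⌊(m(p^n-1)(Φ(i)+1) - kΦ(i))/p^n⌋` and
`g_F = ((p^n-1)/2)(-2 + Σ_i (Φ(i)+1))`. -/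
theorem boseck_sum_eq_genus_formula
    (p n r m : ℕ) (hp : p.Prime) (hn : 1 ≤ n) (hr : 1 ≤ r) (hm : 1 ≤ m)
    (Φ : Fin r → ℕ) (hΦpos : ∀ i, 1 ≤ Φ i) (hΦcop : ∀ i, Nat.Coprime (Φ i) p)
    (gF : ℚ)
    (hgF : gF = (((p : ℚ) ^ n - 1) / 2) * (-2 + ∑ i, ((Φ i : ℚ) + 1))) :
    ∑ k ∈ Finset.range (p ^ n), ∑ i,
        (⌊(((m : ℤ) * ((p : ℤ) ^ n - 1) * ((Φ i : ℤ) + 1) - (k : ℤ) * (Φ i : ℤ) : ℤ) : ℚ)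
          / (p : ℚ) ^ n⌋ : ℚ)
      = (2 * (m : ℚ) - 1) * (gF + (p : ℚ) ^ n - 1) :=
  boseck_sum_eq_genus_formula_general p n r m hp Φ hΦcop gF hgF
end
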